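/- (Blow-up in finite time.) For every γ > 0 there exists α_γ ≥ 1 such that for every α > α_γ the limiting dynamical system with ρ = 0 satisfies t* < ∞. More precisely, let S(γ) = sup_{j≥1} Σ_{i=0}^∞ γ_j/γ_{j+i} (a finite number), and suppose α > 1 + 2·S(γ) and (1+γ)^{⌊α⌋/2} − 1 < ((1+γ)^{⌊α⌋} − 1)/S(γ). Then, writing a = ⌊α⌋, one has Δ_1 = (1 − (α − a))·γ/γ_a, Δ_n ≤ γ/γ_{a+n−1} for all n ≥ 2, and hence t* ≤ γ·Σ_{n=0}^∞ ((1+γ)^{a+n} − 1)^{−1} < ∞. -/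

import Mathlib

namespace SelectiveSweeps

noncomputable section

/-- `γ_j = (1+γ)^j − 1` for `j ∈ ℤ`. -/
def gam (γ : ℝ) (j : ℤ) : ℝ := (1 + γ) ^ j - 1

/-- `λ_j = (1+ρ)(1+γ)^j − 1` for `j ∈ ℤ`. -/
def lam (γ ρ : ℝ) (j : ℤ) : ℝ := (1 + ρ) * (1 + γ) ^ j - 1

/-- A state of the recursion: the time `s_n` together with the values `y_j(s_n)`, `j ∈ ℕ`. -/
structure St where
  s : ℝ
  y : ℕ → ℝ

/-- `α_n = α + ρ s_n / γ`. -/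
def alphaOf (γ ρ α : ℝ) (σ : St) : ℝ := α + ρ * σ.s / γ

/-- `m_n = max {j : y_j(s_n) = α_n}`. -/
def mOf (γ ρ α : ℝ) (σ : St) : ℕ := sSup {j : ℕ | σ.y j = alphaOf γ ρ α σ}

/-- `k_n = max {j : y_j(s_n) > 0}`. -/
def kOf (σ : St) : ℕ := sSup {j : ℕ | 0 < σ.y j}

/-- `k_n^* = k_n` if `y_{k_n}(s_n) < 1`, and `k_n + 1` if `y_{k_n}(s_n) = 1`. -/
def kstarOf (σ : St) : ℕ := if σ.y (kOf σ) < 1 then kOf σ else kOf σ + 1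

/-- `δ_{n,j}`:  `(α_n − y_j(s_n))·γ/(λ_{j−m_n} − ρ)` for `m_n < j < k_n^*` and
`(1 − y_{k_n^*}(s_n))·γ/λ_{k_n^*−m_n}` for `j = k_n^*`. -/
def deltaOf (γ ρ α : ℝ) (σ : St) (j : ℕ) : ℝ :=
  if j = kstarOf σ then
    (1 - σ.y (kstarOf σ)) * γ / lam γ ρ ((kstarOf σ : ℤ) - (mOf γ ρ α σ : ℤ))
  else
    (alphaOf γ ρ α σ - σ.y j) * γ / (lam γ ρ ((j : ℤ) - (mOf γ ρ α σ : ℤ)) - ρ)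

/-- `Δ_n = min {δ_{n,j} : m_n < j ≤ k_n^*}`. -/
def DeltaOf (γ ρ α : ℝ) (σ : St) : ℝ :=
  sInf (deltaOf γ ρ α σ '' Set.Ioc (mOf γ ρ α σ) (kstarOf σ))

/-- One step of the recursion: `s_{n+1} = s_n + Δ_n` and, evaluating
`y_j(s_n + t) = max (y_j(s_n) + t·λ_{j−m_n}/γ) 0` (for `j ≤ k_n^*`; `0` for `j > k_n^*`)
at `t = Δ_n`, the new values `y_j(s_{n+1})`. -/
def step (γ ρ α : ℝ) (σ : St) : St where
  s := σ.s + DeltaOf γ ρ α σ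
  y := fun j =>
    if j ≤ kstarOf σ then
      max (σ.y j + DeltaOf γ ρ α σ * lam γ ρ ((j : ℤ) - (mOf γ ρ α σ : ℤ)) / γ) 0
    else 0

/-- The state after `n` steps: `(state γ ρ α n).s = s_n` and `(state γ ρ α n).y j = y_j(s_n)`.
Initially `s_0 = 0` and `y_j(0) = max (α − j) 0`. -/
def state (γ ρ α : ℝ) (n : ℕ) : St :=
  (step γ ρ α)^[n] ⟨0, fun j => max (α - j) 0⟩

/-- The index `n` of the interval `[s_n, s_{n+1}]` used to evaluate `y_j` at time `t`. -/
def idxAt (γ ρ α : ℝ) (t : ℝ) : ℕ := sInf {n : ℕ | t < (state γ ρ α (n + 1)).s}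

/-- `y_j(t)`, evaluated via the piecewise linear recursion: for `s_n ≤ t ≤ s_{n+1}`,
`y_j(t) = max (y_j(s_n) + (t − s_n)·λ_{j−m_n}/γ) 0` for `j ≤ k_n^*`, and `0` for `j > k_n^*`. -/
def yAt (γ ρ α : ℝ) (j : ℕ) (t : ℝ) : ℝ :=
  let σ := state γ ρ α (idxAt γ ρ α t)
  if j ≤ kstarOf σ then
    max (σ.y j + (t - σ.s) * lam γ ρ ((j : ℤ) - (mOf γ ρ α σ : ℤ)) / γ) 0
  else 0

/-- Conditions (i)–(ii) at a state: (i) the sets defining `m_n` and `k_n` are nonempty and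
bounded, `y_j(s_n) ≤ α_n` for all `j`, and `y_j(s_n) > 0` for `m_n ≤ j ≤ k_n`;
(ii) `y_{j+1}(s_n) ≥ y_j(s_n) − 1` for all `0 ≤ j ≤ k_n`. -/
def Cond (γ ρ α : ℝ) (σ : St) : Prop :=
  {j : ℕ | σ.y j = alphaOf γ ρ α σ}.Nonempty ∧
  BddAbove {j : ℕ | σ.y j = alphaOf γ ρ α σ} ∧
  {j : ℕ | 0 < σ.y j}.Nonempty ∧
  BddAbove {j : ℕ | 0 < σ.y j} ∧
  (∀ j : ℕ, σ.y j ≤ alphaOf γ ρ α σ) ∧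
  (∀ j : ℕ, mOf γ ρ α σ ≤ j → j ≤ kOf σ → 0 < σ.y j) ∧
  (∀ j : ℕ, j ≤ kOf σ → σ.y j - 1 ≤ σ.y (j + 1))

/-- `t_j = inf { t ∈ [0, t*) : y_j(t) = 1 }`, where `t < t* = Σ_n Δ_n = sup_n s_n` is
expressed as `∃ n, t < s_n`. -/
def tHit (γ ρ α : ℝ) (j : ℕ) : ℝ :=
  sInf {t : ℝ | 0 ≤ t ∧ (∃ n : ℕ, t < (state γ ρ α n).s) ∧ yAt γ ρ α j t = 1}


/-- `S(γ) = sup_{j ≥ 1} Σ_{i=0}^∞ γ_j/γ_{j+i}`. -/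
def Sg (γ : ℝ) : ℝ :=
  ⨆ j : ℕ, ∑' i : ℕ, gam γ ((j : ℤ) + 1) / gam γ ((j : ℤ) + 1 + (i : ℤ))

/-!
With `ρ = 0` the level `α_n = α` is fixed and remains attained only by `y_0`, so the system is a
travelling front. Writing `a = ⌊α⌋`, during step `n` the front sits at `a + n`, each `y_j` with
`j ≤ a + n` grows at rate `γ_j / γ`, and the step ends when `y_{a+n}` reaches `1`; hence
`Δ = γ / γ_{a+n}` after the first step and the profiles `y_j(s_n)` are explicit. This picture is
consistent as long as no `y_j` with `0 < j < a + n` reaches `α` first. For `j > a`, `y_j` is a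
partial sum of a series bounded by `S(γ) < α`; for `j ≤ a` one uses
`s_n ≤ γ Σ_l 1/γ_{a+l} ≤ γ S(γ)/γ_a`, together with `2 S(γ) < a` when `j > a/2` and the growth
condition on `(1+γ)^{a/2}` when `j ≤ a/2`. As `γ_{a+n}` grows geometrically, `Σ Δ_n < ∞`, and
by Bernoulli's inequality both conditions hold once `α > 1 + 2 S(γ)` and `α > 1 + 2 S(γ)/γ`.
-/

variable {γ α : ℝ}

lemma lam_zero (γ : ℝ) (j : ℤ) : lam γ 0 j = gam γ j := by simp [lam, gam]

@[simp] lemma alphaOf_zero (γ α : ℝ) (σ : St) : alphaOf γ 0 α σ = α := by simp [alphaOf]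

lemma state_succ (γ ρ α : ℝ) (n : ℕ) :
    state γ ρ α (n + 1) = step γ ρ α (state γ ρ α n) :=
  Function.iterate_succ_apply' _ _ _

section gam

lemma gam_strictMono (hγ : 0 < γ) : StrictMono (gam γ) := fun m n h => by
  have := zpow_lt_zpow_right₀ (by linarith : (1 : ℝ) < 1 + γ) h
  simp only [gam]
  linarith

lemma gam_pos (hγ : 0 < γ) {m : ℤ} (hm : 0 < m) : 0 < gam γ m := by
  simpa [gam] using gam_strictMono hγ hm

lemma gam_nonneg (hγ : 0 < γ) {m : ℤ} (hm : 0 ≤ m) : 0 ≤ gam γ m := by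
  simpa [gam] using (gam_strictMono hγ).monotone hm

lemma gam_mul_pow_le (hγ : 0 < γ) (m : ℤ) (i : ℕ) :
    gam γ m * (1 + γ) ^ i ≤ gam γ (m + i) := by
  have h1 : (1 : ℝ) ≤ (1 + γ) ^ i := one_le_pow₀ (by linarith)
  rw [gam, gam, zpow_add₀ (by positivity), zpow_natCast]
  linarith

lemma gam_div_le_geometric (hγ : 0 < γ) {m : ℤ} (hm : 0 < m) (i : ℕ) :
    gam γ m / gam γ (m + i) ≤ (1 + γ)⁻¹ ^ i := by
  rw [inv_pow, div_le_iff₀ (gam_pos hγ (by omega)), ← div_eq_inv_mul,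
    le_div_iff₀ (by positivity)]
  exact gam_mul_pow_le hγ m i

lemma summable_gam_div (hγ : 0 < γ) {m : ℤ} (hm : 0 < m) :
    Summable fun i : ℕ => gam γ m / gam γ (m + i) :=
  Summable.of_nonneg_of_le
    (fun i => div_nonneg (gam_pos hγ hm).le (gam_pos hγ (by omega)).le)
    (gam_div_le_geometric hγ hm)
    (summable_geometric_of_lt_one (by positivity) (inv_lt_one_of_one_lt₀ (by linarith)))

lemma bddAbove_tsum_gam_div (hγ : 0 < γ) :
    BddAbove (Set.range fun j : ℕ =>
      ∑' i : ℕ, gam γ ((j : ℤ) + 1) / gam γ ((j : ℤ) + 1 + (i : ℤ))) := by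
  have hr : (1 + γ)⁻¹ < 1 := inv_lt_one_of_one_lt₀ (by linarith)
  refine ⟨(1 - (1 + γ)⁻¹)⁻¹, Set.forall_mem_range.2 fun j => ?_⟩
  rw [← tsum_geometric_of_lt_one (by positivity) hr]
  exact (summable_gam_div hγ (by omega)).tsum_le_tsum (gam_div_le_geometric hγ (by omega))
    (summable_geometric_of_lt_one (by positivity) hr)

lemma tsum_gam_div_le_Sg (hγ : 0 < γ) {m : ℤ} (hm : 0 < m) :
    ∑' i : ℕ, gam γ m / gam γ (m + i) ≤ Sg γ := by
  obtain ⟨j, rfl⟩ : ∃ j : ℕ, m = (j : ℤ) + 1 := ⟨(m - 1).toNat, by omega⟩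
  exact le_ciSup (bddAbove_tsum_gam_div hγ) j

lemma sum_gam_div_le_Sg (hγ : 0 < γ) {m : ℤ} (hm : 0 < m) (N : ℕ) :
    ∑ i ∈ Finset.range N, gam γ m / gam γ (m + i) ≤ Sg γ :=
  ((summable_gam_div hγ hm).sum_le_tsum _
    fun i _ => div_nonneg (gam_pos hγ hm).le (gam_pos hγ (by omega)).le).trans
    (tsum_gam_div_le_Sg hγ hm)

lemma one_le_Sg (hγ : 0 < γ) : 1 ≤ Sg γ := by
  simpa [div_self (gam_pos hγ one_pos).ne'] using sum_gam_div_le_Sg hγ one_pos 1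

lemma summable_inv_gam (hγ : 0 < γ) {m : ℤ} (hm : 0 < m) :
    Summable fun i : ℕ => (gam γ (m + i))⁻¹ := by
  simpa [div_eq_mul_inv, ← mul_assoc, inv_mul_cancel₀ (gam_pos hγ hm).ne'] using
    (summable_gam_div hγ hm).mul_left (gam γ m)⁻¹

lemma tsum_inv_gam_le (hγ : 0 < γ) {m : ℤ} (hm : 0 < m) :
    ∑' i : ℕ, (gam γ (m + i))⁻¹ ≤ Sg γ / gam γ m := by
  rw [le_div_iff₀ (gam_pos hγ hm), ← tsum_mul_right]
  simpa [div_eq_inv_mul] using tsum_gam_div_le_Sg hγ hm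

end gam

section step

variable {ρ : ℝ} {σ : St}

lemma mOf_eq_zero (h0 : σ.y 0 = alphaOf γ ρ α σ)
    (hne : ∀ j, 0 < j → σ.y j ≠ alphaOf γ ρ α σ) : mOf γ ρ α σ = 0 := by
  have : {j : ℕ | σ.y j = alphaOf γ ρ α σ} = {0} :=
    Set.ext fun j => ⟨fun hj => by_contra fun h => hne j (Nat.pos_of_ne_zero h) hj,
      fun hj => hj ▸ h0⟩
  rw [mOf, this, csSup_singleton]

lemma kOf_eq {k : ℕ} (h : ∀ j, 0 < σ.y j ↔ j ≤ k) : kOf σ = k := by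
  rw [kOf, show {j : ℕ | 0 < σ.y j} = Set.Iic k from Set.ext h, csSup_Iic]

lemma DeltaOf_eq_deltaOf_kstarOf (hm : mOf γ ρ α σ < kstarOf σ)
    (hle : ∀ j, mOf γ ρ α σ < j → j < kstarOf σ →
      deltaOf γ ρ α σ (kstarOf σ) ≤ deltaOf γ ρ α σ j) :
    DeltaOf γ ρ α σ = deltaOf γ ρ α σ (kstarOf σ) := by
  refine IsLeast.csInf_eq ⟨⟨_, ⟨hm, le_rfl⟩, rfl⟩, ?_⟩
  rintro _ ⟨j, ⟨hmj, hjk⟩, rfl⟩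
  rcases hjk.lt_or_eq with hjk | rfl
  · exact hle j hmj hjk
  · exact le_rfl

/-- `top_first` says that, with every `y_j` growing at rate `γ_j / γ`, the front value `y_T`
reaches `1` before any `y_j` with `0 < j < T` reaches `α`. -/
structure Shape (γ α : ℝ) (σ : St) (T : ℕ) : Prop where
  y_zero : σ.y 0 = α
  pos : ∀ j, 0 < j → j < T → 0 < σ.y j
  top_nonneg : 0 ≤ σ.y T
  top_lt_one : σ.y T < 1
  below_top : σ.y T = 0 → σ.y (T - 1) = 1
  eq_zero : ∀ j, T < j → σ.y j = 0
  top_first : ∀ j, 0 < j → j < T → gam γ j * (1 - σ.y T) / gam γ T < α - σ.y j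

namespace Shape

variable {T : ℕ}

lemma pos_of_lt (h : Shape γ α σ T) (hα : 0 < α) {j : ℕ} (hj : j < T) : 0 < σ.y j := by
  rcases Nat.eq_zero_or_pos j with rfl | hj0
  · exact h.y_zero ▸ hα
  · exact h.pos j hj0 hj

lemma lt_alpha (h : Shape γ α σ T) (hγ : 0 < γ) (hα : 1 ≤ α) {j : ℕ} (hj : 0 < j) :
    σ.y j < α := by
  rcases lt_trichotomy j T with hjT | rfl | hjT
  · have : 0 ≤ gam γ j * (1 - σ.y T) / gam γ T :=
      div_nonneg (mul_nonneg (gam_nonneg hγ (by positivity)) (by linarith [h.top_lt_one]))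
        (gam_nonneg hγ (by positivity))
    linarith [h.top_first j hj hjT]
  · linarith [h.top_lt_one]
  · linarith [h.eq_zero j hjT]

lemma mOf_eq (h : Shape γ α σ T) (hγ : 0 < γ) (hα : 1 ≤ α) : mOf γ 0 α σ = 0 :=
  mOf_eq_zero (by simpa using h.y_zero) fun j hj => by
    simpa using (h.lt_alpha hγ hα hj).ne

lemma kstarOf_eq (h : Shape γ α σ T) (hα : 0 < α) (hT : 0 < T) : kstarOf σ = T := by
  by_cases hyT : σ.y T = 0
  · have hk : kOf σ = T - 1 := kOf_eq fun j => by
      refine ⟨fun hj => ?_, fun hj => h.pos_of_lt hα (by omega)⟩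
      by_contra hjT
      rcases (show T ≤ j by omega).eq_or_lt with rfl | hjT
      · exact hj.ne' hyT
      · exact hj.ne' (h.eq_zero j hjT)
    rw [kstarOf, hk, h.below_top hyT, if_neg (lt_irrefl 1)]
    omega
  · have hk : kOf σ = T := kOf_eq fun j => by
      refine ⟨fun hj => ?_, fun hj => ?_⟩
      · by_contra hjT
        exact hj.ne' (h.eq_zero j (by omega))
      · rcases hj.lt_or_eq with hjT | rfl
        · exact h.pos_of_lt hα hjT
        · exact h.top_nonneg.lt_of_ne' hyT
    rw [kstarOf, hk, if_pos h.top_lt_one]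

lemma DeltaOf_eq (h : Shape γ α σ T) (hγ : 0 < γ) (hα : 1 ≤ α) (hT : 0 < T) :
    DeltaOf γ 0 α σ = (1 - σ.y T) * γ / gam γ T := by
  have hm := h.mOf_eq hγ hα
  have hk := h.kstarOf_eq (by linarith) hT
  rw [DeltaOf_eq_deltaOf_kstarOf (by omega) fun j hj hjT => ?_]
  · simp [deltaOf, hm, hk, lam_zero]
  · rw [hm] at hj
    rw [hk] at hjT ⊢
    have hgT : 0 < gam γ T := gam_pos hγ (by omega)
    have hgj : 0 < gam γ j := gam_pos hγ (by omega)
    have key := (div_lt_iff₀ hgT).1 (h.top_first j hj hjT)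
    simp only [deltaOf, hm, hk, if_pos, if_neg hjT.ne, lam_zero, Nat.cast_zero, sub_zero,
      alphaOf_zero]
    rw [div_le_div_iff₀ hgT hgj]
    nlinarith

lemma step_eq (h : Shape γ α σ T) (hγ : 0 < γ) (hα : 1 ≤ α) (hT : 0 < T) :
    step γ 0 α σ = ⟨σ.s + DeltaOf γ 0 α σ,
      fun j => if j ≤ T then σ.y j + DeltaOf γ 0 α σ * gam γ j / γ else 0⟩ := by
  have hΔ : 0 ≤ DeltaOf γ 0 α σ := by
    rw [h.DeltaOf_eq hγ hα hT]
    exact div_nonneg (mul_nonneg (by linarith [h.top_lt_one]) hγ.le) (gam_nonneg hγ (by omega))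
  simp only [step, h.mOf_eq hγ hα, h.kstarOf_eq (by linarith) hT, lam_zero, Nat.cast_zero,
    sub_zero]
  congr 1
  funext j
  split_ifs with hjT
  · have : 0 ≤ DeltaOf γ 0 α σ * gam γ j / γ :=
      div_nonneg (mul_nonneg hΔ (gam_nonneg hγ (by positivity))) hγ.le
    refine max_eq_left (add_nonneg ?_ this)
    rcases hjT.lt_or_eq with hjT | rfl
    · exact (h.pos_of_lt (by linarith) hjT).le
    · exact h.top_nonneg
  · rfl

end Shape

end step

section explicit

/-- The increments of the explicit solution, with `a = ⌊α⌋`; `explicitDelta γ α a n` is the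
paper's `Δ_{n+1}`. -/
def explicitDelta (γ α : ℝ) (a n : ℕ) : ℝ :=
  if n = 0 then (1 - (α - a)) * γ / gam γ a else γ / gam γ (a + n)

def explicitTime (γ α : ℝ) (a n : ℕ) : ℝ := ∑ i ∈ Finset.range n, explicitDelta γ α a i

/-- `y_j(s_n)` of the explicit solution: the front is at `a + n`, and `y_j` for `j > a`
has been growing since step `j - a`, at rate `γ_j / γ`. -/
def explicitY (γ α : ℝ) (a n j : ℕ) : ℝ :=
  if j ≤ a then α - j + gam γ j * explicitTime γ α a n / γ
  else ∑ l ∈ Finset.Ico (j - a) n, gam γ j / gam γ (a + l)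

variable {a n j : ℕ}

lemma explicitDelta_pos (hγ : 0 < γ) (ha' : α < a + 1) (ha0 : 0 < a) (n : ℕ) :
    0 < explicitDelta γ α a n := by
  unfold explicitDelta
  split_ifs
  · exact div_pos (mul_pos (by linarith) hγ) (gam_pos hγ (by omega))
  · exact div_pos hγ (gam_pos hγ (by omega))

lemma explicitDelta_le (hγ : 0 < γ) (ha : (a : ℝ) ≤ α) (ha0 : 0 < a) (n : ℕ) :
    explicitDelta γ α a n ≤ γ / gam γ (a + n) := by
  unfold explicitDelta
  split_ifs with hn
  · subst hn
    have hga := gam_pos hγ (m := a) (by omega)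
    simpa using div_le_div_of_nonneg_right (by nlinarith : (1 - (α - a)) * γ ≤ γ) hga.le
  · exact le_rfl

lemma explicitTime_nonneg (hγ : 0 < γ) (ha' : α < a + 1) (ha0 : 0 < a) (n : ℕ) :
    0 ≤ explicitTime γ α a n :=
  Finset.sum_nonneg fun i _ => (explicitDelta_pos hγ ha' ha0 i).le

lemma explicitTime_pos (hγ : 0 < γ) (ha' : α < a + 1) (ha0 : 0 < a) (hn : 0 < n) :
    0 < explicitTime γ α a n :=
  Finset.sum_pos (fun i _ => explicitDelta_pos hγ ha' ha0 i) ⟨0, Finset.mem_range.2 hn⟩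

lemma explicitTime_le (hγ : 0 < γ) (ha : (a : ℝ) ≤ α) (ha0 : 0 < a) (n : ℕ) :
    explicitTime γ α a n ≤ γ * ∑ i ∈ Finset.range n, (gam γ (a + i))⁻¹ := by
  rw [Finset.mul_sum]
  exact Finset.sum_le_sum fun i _ => explicitDelta_le hγ ha ha0 i

lemma explicitTime_div_add_inv_le (hγ : 0 < γ) (ha : (a : ℝ) ≤ α) (ha0 : 0 < a) (n : ℕ) :
    explicitTime γ α a n / γ + (gam γ (a + n))⁻¹ ≤ Sg γ / gam γ a := by
  have hm : (0 : ℤ) < a := by omega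
  calc explicitTime γ α a n / γ + (gam γ (a + n))⁻¹
      ≤ ∑ i ∈ Finset.range n, (gam γ (a + i))⁻¹ + (gam γ (a + n))⁻¹ := by
        gcongr
        rw [div_le_iff₀ hγ, mul_comm]
        exact explicitTime_le hγ ha ha0 n
    _ = ∑ i ∈ Finset.range (n + 1), (gam γ (a + i))⁻¹ := (Finset.sum_range_succ _ n).symm
    _ ≤ ∑' i : ℕ, (gam γ (a + i))⁻¹ :=
        (summable_inv_gam hγ hm).sum_le_tsum _
          fun i _ => inv_nonneg.2 (gam_nonneg hγ (by omega))
    _ ≤ Sg γ / gam γ a := tsum_inv_gam_le hγ hm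

lemma explicitY_initial (ha : (a : ℝ) ≤ α) (ha' : α < a + 1) (j : ℕ) :
    explicitY γ α a 0 j = max (α - j) 0 := by
  unfold explicitY
  split_ifs with hj
  · have : (j : ℝ) ≤ a := by exact_mod_cast hj
    simp [explicitTime, max_eq_left (by linarith : 0 ≤ α - j)]
  · have : (a : ℝ) + 1 ≤ j := by exact_mod_cast (by omega : a + 1 ≤ j)
    simp [max_eq_right (by linarith : α - j ≤ 0)]

lemma explicitY_zero (n : ℕ) : explicitY γ α a n 0 = α := by
  simp [explicitY, gam]

lemma explicitY_eq_zero (haj : a < j) (hj : a + n ≤ j) : explicitY γ α a n j = 0 := by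
  rw [explicitY, if_neg (by omega), Finset.Ico_eq_empty (by omega), Finset.sum_empty]

lemma explicitY_front (n : ℕ) :
    explicitY γ α a n (a + n) = if n = 0 then α - a else 0 := by
  split_ifs with hn
  · subst hn
    simp [explicitY, explicitTime]
  · exact explicitY_eq_zero (by omega) le_rfl

lemma explicitY_pos (hγ : 0 < γ) (ha : (a : ℝ) ≤ α) (ha' : α < a + 1) (hj : 0 < j)
    (hjn : j < a + n) : 0 < explicitY γ α a n j := by
  unfold explicitY
  split_ifs with hja
  · have hterm : 0 ≤ gam γ j * explicitTime γ α a n / γ :=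
      div_nonneg (mul_nonneg (gam_nonneg hγ (by omega))
        (explicitTime_nonneg hγ ha' (by omega) n)) hγ.le
    rcases hja.lt_or_eq with hja | rfl
    · have : (j : ℝ) + 1 ≤ a := by exact_mod_cast hja
      linarith
    · have : 0 < gam γ j * explicitTime γ α j n / γ :=
        div_pos (mul_pos (gam_pos hγ (by omega)) (explicitTime_pos hγ ha' hj (by omega))) hγ
      linarith
  · refine Finset.sum_pos (fun l hl => div_pos (gam_pos hγ (by omega)) (gam_pos hγ ?_))
      ⟨j - a, Finset.mem_Ico.2 ⟨le_rfl, by omega⟩⟩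
    have := (Finset.mem_Ico.1 hl).1
    omega

lemma explicitY_succ_front (hγ : 0 < γ) (ha0 : 0 < a) (n : ℕ) :
    explicitY γ α a (n + 1) (a + n) = 1 := by
  rcases Nat.eq_zero_or_pos n with rfl | hn
  · have hga : gam γ a ≠ 0 := (gam_pos hγ (by omega)).ne'
    rw [explicitY, if_pos (by omega), explicitTime, Finset.sum_range_one, explicitDelta,
      if_pos rfl, Nat.add_zero]
    field_simp
    ring
  · rw [explicitY, if_neg (by omega), Nat.add_sub_cancel_left, Nat.Ico_succ_singleton,
      Finset.sum_singleton, Nat.cast_add, div_self (gam_pos hγ (by omega)).ne']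

lemma explicitY_succ (hγ : 0 < γ) (hj : j ≤ a + n) :
    explicitY γ α a (n + 1) j = explicitY γ α a n j + explicitDelta γ α a n * gam γ j / γ := by
  unfold explicitY
  split_ifs with hja
  · rw [explicitTime, Finset.sum_range_succ, ← explicitTime]
    ring
  · rw [Finset.sum_Ico_succ_top (by omega), explicitDelta, if_neg (by omega)]
    field_simp

lemma explicitDelta_eq_front (n : ℕ) :
    (1 - explicitY γ α a n (a + n)) * γ / gam γ ↑(a + n) = explicitDelta γ α a n := by
  rw [explicitY_front, explicitDelta]
  split_ifs with hn
  · simp [hn]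
  · simp

end explicit

section front

variable {a n j : ℕ}

lemma pos_of_two_mul_Sg_lt (hγ : 0 < γ) (hSa : 2 * Sg γ < a) : 0 < a := by
  exact_mod_cast (by linarith [one_le_Sg hγ] : (0 : ℝ) < a)

lemma gam_mul_Sg_lt (hγ : 0 < γ) (hSa : 2 * Sg γ < a)
    (hgrowth : (1 + γ) ^ ((a : ℝ) / 2) - 1 < ((1 + γ) ^ (a : ℝ) - 1) / Sg γ)
    (hj : 0 < j) (hja : j ≤ a) : gam γ j * Sg γ < j * gam γ a := by
  have hS := one_le_Sg hγ
  have hga : 0 < gam γ a := gam_pos hγ (by omega)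
  have hgam_rpow (k : ℕ) : gam γ k = (1 + γ) ^ (k : ℝ) - 1 := by
    rw [gam, zpow_natCast, Real.rpow_natCast]
  rcases le_or_gt (j : ℝ) (a / 2) with hsmall | hlarge
  · have hj1 : (1 : ℝ) ≤ j := by exact_mod_cast hj
    have : gam γ j < gam γ a / Sg γ := by
      have := Real.rpow_le_rpow_of_exponent_le (by linarith : (1 : ℝ) ≤ 1 + γ) hsmall
      rw [hgam_rpow, hgam_rpow]
      linarith
    calc gam γ j * Sg γ < gam γ a := (lt_div_iff₀ (by linarith)).1 this
      _ ≤ j * gam γ a := le_mul_of_one_le_left hga.le hj1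
  · calc gam γ j * Sg γ ≤ gam γ a * Sg γ :=
          mul_le_mul_of_nonneg_right ((gam_strictMono hγ).monotone (by omega)) (by linarith)
      _ < gam γ a * j := mul_lt_mul_of_pos_left (by linarith) hga
      _ = j * gam γ a := mul_comm _ _

lemma explicitY_add_le_Sg (hγ : 0 < γ) (haj : a < j) (hjn : j ≤ a + n) :
    explicitY γ α a n j + gam γ j / gam γ (a + n) ≤ Sg γ := by
  rw [explicitY, if_neg (by omega), ← Finset.sum_Ico_succ_top (by omega),
    Finset.sum_Ico_eq_sum_range]
  calc ∑ k ∈ Finset.range (n + 1 - (j - a)), gam γ j / gam γ (a + (j - a + k : ℕ))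
      = ∑ k ∈ Finset.range (n + 1 - (j - a)), gam γ j / gam γ (j + k) :=
        Finset.sum_congr rfl fun k _ => by rw [show (a : ℤ) + (j - a + k : ℕ) = j + k by omega]
    _ ≤ Sg γ := sum_gam_div_le_Sg hγ (by omega) _

lemma gam_div_lt_sub_explicitY (hγ : 0 < γ) (ha : (a : ℝ) ≤ α) (hSa : 2 * Sg γ < a)
    (hgrowth : (1 + γ) ^ ((a : ℝ) / 2) - 1 < ((1 + γ) ^ (a : ℝ) - 1) / Sg γ)
    (hj : 0 < j) (hjn : j < a + n) :
    gam γ j / gam γ (a + n) < α - explicitY γ α a n j := by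
  by_cases hja : j ≤ a
  · have hga : 0 < gam γ a := gam_pos hγ (by omega)
    have hsum := explicitTime_div_add_inv_le (n := n) hγ ha (by omega)
    rw [explicitY, if_pos hja]
    have : gam γ j * (explicitTime γ α a n / γ + (gam γ (a + n))⁻¹) < j :=
      calc _ ≤ gam γ j * (Sg γ / gam γ a) :=
            mul_le_mul_of_nonneg_left hsum (gam_nonneg hγ (by omega))
        _ < j := by
            rw [← mul_div_assoc, div_lt_iff₀ hga]
            exact gam_mul_Sg_lt hγ hSa hgrowth hj hja
    rw [mul_add, ← div_eq_mul_inv, ← mul_div_assoc] at this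
    linarith
  · linarith [explicitY_add_le_Sg (α := α) hγ (not_le.1 hja) hjn.le]

/-- The two hypotheses on `α`, in terms of `a = ⌊α⌋`. -/
structure FrontConditions (γ α : ℝ) (a : ℕ) : Prop where
  gamma_pos : 0 < γ
  floor_le : (a : ℝ) ≤ α
  lt_floor_add_one : α < a + 1
  two_mul_Sg_lt : 2 * Sg γ < a
  growth : (1 + γ) ^ ((a : ℝ) / 2) - 1 < ((1 + γ) ^ (a : ℝ) - 1) / Sg γ

namespace FrontConditions

lemma one_le_alpha (h : FrontConditions γ α a) : 1 ≤ α := by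
  linarith [one_le_Sg h.gamma_pos, h.floor_le, h.two_mul_Sg_lt]

lemma shape (h : FrontConditions γ α a) (n : ℕ) :
    Shape γ α ⟨explicitTime γ α a n, explicitY γ α a n⟩ (a + n) := by
  obtain ⟨hγ, ha, ha', hSa, hgrowth⟩ := h
  have ha0 := pos_of_two_mul_Sg_lt hγ hSa
  have hfront := explicitY_front (γ := γ) (α := α) (a := a) n
  have hfront_nonneg : 0 ≤ explicitY γ α a n (a + n) := by rw [hfront]; split_ifs <;> linarith
  have hfront_lt_one : explicitY γ α a n (a + n) < 1 := by rw [hfront]; split_ifs <;> linarith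
  refine
    { y_zero := explicitY_zero n
      pos := fun j hj hjn => explicitY_pos hγ ha ha' hj hjn
      top_nonneg := hfront_nonneg
      top_lt_one := hfront_lt_one
      below_top := fun htop => ?_
      eq_zero := fun j hj => explicitY_eq_zero (by omega) hj.le
      top_first := fun j hj hjn => ?_ }
  · dsimp only at htop ⊢
    rcases n with _ | n
    · rw [hfront, if_pos rfl] at htop
      rw [explicitY_initial ha ha', Nat.add_zero, Nat.cast_pred ha0, max_eq_left] <;> linarith
    · exact explicitY_succ_front hγ ha0 n
  · refine (div_le_div_of_nonneg_right ?_ (gam_nonneg hγ (by omega))).trans_lt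
      (gam_div_lt_sub_explicitY hγ ha hSa hgrowth hj hjn)
    exact mul_le_of_le_one_right (gam_nonneg hγ (by omega)) (by linarith)

lemma front_pos (h : FrontConditions γ α a) (n : ℕ) : 0 < a + n :=
  Nat.add_pos_left (pos_of_two_mul_Sg_lt h.gamma_pos h.two_mul_Sg_lt) n

lemma DeltaOf_explicit (h : FrontConditions γ α a) (n : ℕ) :
    DeltaOf γ 0 α ⟨explicitTime γ α a n, explicitY γ α a n⟩ = explicitDelta γ α a n :=
  ((h.shape n).DeltaOf_eq h.gamma_pos h.one_le_alpha (h.front_pos n)).trans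
    (explicitDelta_eq_front n)

lemma step_explicit (h : FrontConditions γ α a) (n : ℕ) :
    step γ 0 α ⟨explicitTime γ α a n, explicitY γ α a n⟩ =
      ⟨explicitTime γ α a (n + 1), explicitY γ α a (n + 1)⟩ := by
  rw [(h.shape n).step_eq h.gamma_pos h.one_le_alpha (h.front_pos n), h.DeltaOf_explicit n]
  congr 1
  · exact (Finset.sum_range_succ _ n).symm
  · funext j
    split_ifs with hj
    · exact (explicitY_succ h.gamma_pos hj).symm
    · exact (explicitY_eq_zero (by omega) (by omega)).symm

lemma state_eq_explicit (h : FrontConditions γ α a) :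
    ∀ n, state γ 0 α n = ⟨explicitTime γ α a n, explicitY γ α a n⟩
  | 0 => by
    change (⟨0, fun j => max (α - j) 0⟩ : St) = _
    congr 1
    exact funext fun j => (explicitY_initial h.floor_le h.lt_floor_add_one j).symm
  | n + 1 => by rw [state_succ, h.state_eq_explicit n, h.step_explicit n]

end FrontConditions

end front

lemma rpow_half_sub_one_lt (hγ : 0 < γ) {S x : ℝ} (hS : 0 < S) (hx : 2 ≤ x)
    (hxS : 2 * S / γ < x) : (1 + γ) ^ (x / 2) - 1 < ((1 + γ) ^ x - 1) / S := by
  set r := (1 + γ) ^ (x / 2)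
  have hbern : 1 + x / 2 * γ ≤ r := one_add_mul_self_le_rpow_one_add (by linarith) (by linarith)
  have hSr : S < r - 1 := by
    rw [div_lt_iff₀ hγ] at hxS
    linarith
  have hsq : (1 + γ) ^ x = r ^ 2 := by
    rw [← Real.rpow_natCast, ← Real.rpow_mul (by linarith)]
    norm_num
  rw [hsq, lt_div_iff₀ hS]
  nlinarith

theorem explicit_bounds (hγ : 0 < γ) (hα : 1 + 2 * Sg γ < α)
    (hgrowth : (1 + γ) ^ ((⌊α⌋ : ℝ) / 2) - 1 < ((1 + γ) ^ ((⌊α⌋ : ℝ)) - 1) / Sg γ) :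
    DeltaOf γ 0 α (state γ 0 α 0) = (1 - (α - (⌊α⌋ : ℝ))) * γ / gam γ ⌊α⌋ ∧
    (∀ n : ℕ, 2 ≤ n →
      DeltaOf γ 0 α (state γ 0 α (n - 1)) ≤ γ / gam γ (⌊α⌋ + (n : ℤ) - 1)) ∧
    Summable (fun n : ℕ => ((1 + γ) ^ (⌊α⌋ + (n : ℤ)) - 1)⁻¹) ∧
    (∀ N : ℕ, (state γ 0 α N).s ≤ γ * ∑' n : ℕ, ((1 + γ) ^ (⌊α⌋ + (n : ℤ)) - 1)⁻¹) := by
  have hS := one_le_Sg hγ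
  have hα0 : 0 ≤ α := by linarith
  have ha := Nat.floor_le hα0
  have ha' := Nat.lt_floor_add_one α
  have hSa : 2 * Sg γ < ⌊α⌋₊ := by linarith
  have ha0 : (0 : ℤ) < ⌊α⌋₊ := by exact_mod_cast (by linarith : (0 : ℝ) < ⌊α⌋₊)
  rw [← Int.natCast_floor_eq_floor hα0, Int.cast_natCast] at hgrowth ⊢
  have h : FrontConditions γ α ⌊α⌋₊ := ⟨hγ, ha, ha', hSa, hgrowth⟩
  have hstate := h.state_eq_explicit
  have hΔ := h.DeltaOf_explicit
  refine ⟨?_, fun n hn => ?_, summable_inv_gam hγ ha0, fun N => ?_⟩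
  · rw [hstate, hΔ, explicitDelta, if_pos rfl]
  · rw [hstate, hΔ, explicitDelta, if_neg (by omega),
      show (⌊α⌋₊ : ℤ) + (n - 1 : ℕ) = ⌊α⌋₊ + n - 1 by omega]
  · rw [hstate]
    exact (explicitTime_le hγ ha (by omega) N).trans (mul_le_mul_of_nonneg_left
      ((summable_inv_gam hγ ha0).sum_le_tsum _
        fun i _ => inv_nonneg.2 (gam_nonneg hγ (by omega))) hγ.le)

/-- Blow-up in finite time, `ρ = 0`.  For every `γ > 0` there is an
`α_γ ≥ 1` such that `t* < ∞` whenever `α > α_γ`.  More precisely, if `α > 1 + 2 S(γ)` and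
`(1+γ)^{⌊α⌋/2} − 1 < ((1+γ)^{⌊α⌋} − 1)/S(γ)`, then (writing `a = ⌊α⌋`, and with the paper's
indexing `Δ_1, Δ_2, …` for the successive increments, so that `Δ_n = s_n − s_{n−1}`)
`Δ_1 = (1 − (α − a))·γ/γ_a`, `Δ_n ≤ γ/γ_{a+n−1}` for all `n ≥ 2`, and hence
`t* ≤ γ·Σ_{n=0}^∞ ((1+γ)^{a+n} − 1)⁻¹ < ∞`. -/
theorem blowup_in_finite_time (γ : ℝ) (hγ : 0 < γ) :
    (∃ αγ : ℝ, 1 ≤ αγ ∧ ∀ α : ℝ, αγ < α →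
      BddAbove (Set.range fun n : ℕ => (state γ 0 α n).s)) ∧
    (∀ α : ℝ, 1 + 2 * Sg γ < α →
      (1 + γ) ^ ((⌊α⌋ : ℝ) / 2) - 1 < ((1 + γ) ^ ((⌊α⌋ : ℝ)) - 1) / Sg γ →
      DeltaOf γ 0 α (state γ 0 α 0) = (1 - (α - (⌊α⌋ : ℝ))) * γ / gam γ ⌊α⌋ ∧
      (∀ n : ℕ, 2 ≤ n →
        DeltaOf γ 0 α (state γ 0 α (n - 1)) ≤ γ / gam γ (⌊α⌋ + (n : ℤ) - 1)) ∧
      Summable (fun n : ℕ => ((1 + γ) ^ (⌊α⌋ + (n : ℤ)) - 1)⁻¹) ∧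
      (∀ N : ℕ, (state γ 0 α N).s ≤ γ * ∑' n : ℕ, ((1 + γ) ^ (⌊α⌋ + (n : ℤ)) - 1)⁻¹)) := by
  have hS := one_le_Sg hγ
  refine ⟨⟨max (1 + 2 * Sg γ) (1 + 2 * Sg γ / γ), le_max_of_le_left (by linarith),
    fun α hα => ?_⟩, fun α => explicit_bounds hγ⟩
  have hα1 : 1 + 2 * Sg γ < α := (le_max_left _ _).trans_lt hα
  have hα2 : 1 + 2 * Sg γ / γ < α := (le_max_right _ _).trans_lt hα
  have hfloor : α - 1 < ⌊α⌋ := Int.sub_one_lt_floor α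
  obtain ⟨-, -, -, hs⟩ := explicit_bounds hγ hα1
    (rpow_half_sub_one_lt hγ (by linarith) (by linarith) (by linarith))
  exact ⟨_, Set.forall_mem_range.2 hs⟩

end

end SelectiveSweeps
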